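/- Let b > 0 and let y = (y_1, y_2, y_3, y_4) ∈ ℕ⁴ with y_1 - y_3 = b, and set n = y_1 + y_2 + y_3 + y_4. With k(y) the number of lattice paths from the origin to y all of whose points except y satisfy x_1 - x_3 < b, and k_3*(y) the number of such paths starting from e_3 = (0,0,1,0), the identity b · (n-1) · k_3*(y) = (b+1) · y_3 · k(y) holds; equivalently, k_3*(y)/k(y) = ((b+1)/b) · y_3/(n-1). -/

import Mathlib

/-!
Coordinates `0, 1, 2, 3` play the roles of `x₁, x₂, x₃, x₄`.

A path leaving `R` at `y` enters `y` by an `e₁`-step, since every other predecessor of `y` lies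
outside `R`; so both counts are numbers of paths inside `R` ending at `w = y - e₁`. Inside `R`
only `x₁ - x₃` is constrained: a path from `a` is a shuffle of a `±1` walk in `(x₁, x₃)` that
stays below `c = b - (a₁ - a₃)` with a free walk in `(x₂, x₄)`. The reflection principle counts
the former, which gives a closed form for the number of paths, verified against the defining
recursion of `pathCount`. Since `w` lies just below the barrier, the ballot factor of the closed
form is `c / (u + 1) · C(u + d, u)` for `u` up- and `d` down-steps, and the identity reduces to
two elementary binomial identities.
-/

open scoped Classical

/-- Number of lattice paths from `a` to `x`, each step adding one standard
basis vector, all of whose points (including the endpoints) lie in `A`. -/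
noncomputable def pathCount {k : ℕ} (A : Set (Fin k → ℕ)) (a : Fin k → ℕ)
    (x : Fin k → ℕ) : ℕ :=
  if x = a then (if a ∈ A then 1 else 0)
  else if x ∈ A then
    ∑ i : Fin k, if h : 0 < x i then pathCount A a (Function.update x i (x i - 1)) else 0
  else 0
termination_by ∑ i, x i
decreasing_by
  have h1 := Finset.sum_update_of_mem (Finset.mem_univ i) x (x i - 1)
  have h2 := Finset.sum_eq_sum_sdiff_singleton_add (Finset.mem_univ i) x
  omega

/-- Number of lattice paths from `a` to `y` all of whose points except `y`
lie in `R`. -/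
noncomputable def exitCount {k : ℕ} (R : Set (Fin k → ℕ)) (a y : Fin k → ℕ) : ℕ :=
  pathCount (insert y R) a y

section UpdateSubOne

variable {ι : Type*} [DecidableEq ι] {a x : ι → ℕ} {i : ι}

theorem update_sub_one_lt (hi : 0 < x i) : Function.update x i (x i - 1) < x :=
  update_lt_self_iff.2 (Nat.sub_one_lt_of_lt hi)

theorem le_update_sub_one (hax : a ≤ x) (hi : a i < x i) :
    a ≤ Function.update x i (x i - 1) := fun j => by
  rcases eq_or_ne j i with rfl | hj
  · simpa using Nat.le_sub_one_of_lt hi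
  · simpa [hj] using hax j

theorem update_sub_one_sub (x a : ι → ℕ) (i : ι) :
    Function.update x i (x i - 1) - a = Function.update (x - a) i ((x - a) i - 1) := by
  funext j
  rcases eq_or_ne j i with rfl | hj
  · simp only [Pi.sub_apply, Function.update_self]; omega
  · simp only [Pi.sub_apply, Function.update_of_ne hj]

theorem le_update_sub_one_add_one (x : ι → ℕ) (i j : ι) :
    x j ≤ Function.update x i (x i - 1) j + 1 := by
  rcases eq_or_ne j i with rfl | hj
  · simp only [Function.update_self]; omega
  · simp only [Function.update_of_ne hj]; omega

end UpdateSubOne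

section PathCount

variable {K : ℕ} {A : Set (Fin K → ℕ)} {a x : Fin K → ℕ}

theorem pathCount_self (ha : a ∈ A) : pathCount A a a = 1 := by
  rw [pathCount]; simp [ha]

theorem pathCount_of_notMem (hx : x ∉ A) : pathCount A a x = 0 := by
  rw [pathCount]; split_ifs <;> simp_all

theorem pathCount_of_ne (hxa : x ≠ a) (hx : x ∈ A) :
    pathCount A a x =
      ∑ i, if 0 < x i then pathCount A a (Function.update x i (x i - 1)) else 0 := by
  rw [pathCount, if_neg hxa, if_pos hx]
  simp only [dite_eq_ite]

theorem pathCount_eq_zero_of_not_le (h : ¬ a ≤ x) : pathCount A a x = 0 := by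
  induction x using WellFoundedLT.induction with
  | _ x ih =>
  by_cases hx : x ∈ A
  · rw [pathCount_of_ne (by rintro rfl; exact h le_rfl) hx]
    refine Finset.sum_eq_zero fun i _ => ?_
    split_ifs with hi
    · exact ih _ (update_sub_one_lt hi) fun hle => h (hle.trans (update_sub_one_lt hi).le)
    · rfl
  · exact pathCount_of_notMem hx

theorem pathCount_insert_of_not_le {y : Fin K → ℕ} (h : ¬ y ≤ x) :
    pathCount (insert y A) a x = pathCount A a x := by
  induction x using WellFoundedLT.induction with
  | _ x ih =>
  have hmem : x ∈ insert y A ↔ x ∈ A := by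
    rw [Set.mem_insert_iff, or_iff_right (by rintro rfl; exact h le_rfl)]
  by_cases hxa : x = a
  · subst hxa
    rw [pathCount, pathCount, if_pos rfl, if_pos rfl, hmem]
  by_cases hx : x ∈ A
  · rw [pathCount_of_ne hxa (hmem.2 hx), pathCount_of_ne hxa hx]
    refine Finset.sum_congr rfl fun i _ => ?_
    split_ifs with hi
    · exact ih _ (update_sub_one_lt hi) fun hle => h (hle.trans (update_sub_one_lt hi).le)
    · rfl
  · rw [pathCount_of_notMem hx, pathCount_of_notMem (mt hmem.1 hx)]

theorem exitCount_eq_sum {y : Fin K → ℕ} (hya : y ≠ a) :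
    exitCount A a y =
      ∑ i, if 0 < y i then pathCount A a (Function.update y i (y i - 1)) else 0 := by
  rw [exitCount, pathCount_of_ne hya (Set.mem_insert y A)]
  refine Finset.sum_congr rfl fun i _ => ?_
  split_ifs with hi
  · exact pathCount_insert_of_not_le (update_sub_one_lt hi).not_ge
  · rfl

theorem pathCount_eq_of_recursion (f : (Fin K → ℕ) → ℤ) (ha : a ∈ A) (hfa : f a = 1)
    (hf : ∀ x ∈ A, a ≤ x → x ≠ a → f x = ∑ i,
      if a i < x i ∧ Function.update x i (x i - 1) ∈ A then f (Function.update x i (x i - 1))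
      else 0) (hx : x ∈ A) (hax : a ≤ x) :
    (pathCount A a x : ℤ) = f x := by
  induction x using WellFoundedLT.induction with
  | _ x ih =>
  by_cases hxa : x = a
  · subst hxa
    rw [pathCount_self ha, hfa, Nat.cast_one]
  rw [pathCount_of_ne hxa hx, hf x hx hax hxa, Nat.cast_sum]
  refine Finset.sum_congr rfl fun i _ => ?_
  by_cases hai : a i < x i
  · have hlt := update_sub_one_lt (i := i) (Nat.zero_lt_of_lt hai)
    by_cases hx' : Function.update x i (x i - 1) ∈ A
    · rw [if_pos (Nat.zero_lt_of_lt hai), if_pos ⟨hai, hx'⟩]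
      exact ih _ hlt hx' (le_update_sub_one hax hai)
    · rw [if_pos (Nat.zero_lt_of_lt hai), if_neg (fun h => hx' h.2), pathCount_of_notMem hx',
        Nat.cast_zero]
  · rw [if_neg (fun h : a i < x i ∧ _ => hai h.1)]
    split_ifs with hi
    · rw [pathCount_eq_zero_of_not_le fun h => ?_, Nat.cast_zero]
      have := h i
      simp only [Function.update_self] at this
      omega
    · rfl

end PathCount

def PascalAt (g : ℕ → ℕ → ℤ) (u d : ℕ) : Prop :=
  g u d = (if 0 < u then g (u - 1) d else 0) + (if 0 < d then g u (d - 1) else 0)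

theorem PascalAt.sub {g h : ℕ → ℕ → ℤ} {u d : ℕ} (hg : PascalAt g u d)
    (hh : PascalAt h u d) : PascalAt (g - h) u d := by
  unfold PascalAt at *
  simp only [Pi.sub_apply, hg, hh]
  split_ifs <;> ring

theorem PascalAt.mul_const {g : ℕ → ℕ → ℤ} {u d : ℕ} (hg : PascalAt g u d) (k : ℤ) :
    PascalAt (fun u d => g u d * k) u d := by
  unfold PascalAt at *
  beta_reduce
  rw [hg]
  split_ifs <;> ring

theorem PascalAt.const_mul {g : ℕ → ℕ → ℤ} {u d : ℕ} (hg : PascalAt g u d) (k : ℤ) :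
    PascalAt (fun u d => k * g u d) u d := by
  unfold PascalAt at *
  beta_reduce
  rw [hg]
  split_ifs <;> ring

theorem pascalAt_weighted_sum {g : ℕ → ℕ → ℤ} {u d : ℕ}
    (h : 0 < u + d → PascalAt g u d) (N : ℕ → ℤ) :
    (if 0 < u then N (u - 1 + d) * g (u - 1) d else 0)
      + (if 0 < d then N (u + (d - 1)) * g u (d - 1) else 0)
      = (if 0 < u + d then N (u + d - 1) else 0) * g u d := by
  by_cases h0 : 0 < u + d
  · rw [if_pos h0, h h0]
    split_ifs with hu hd hd
    · rw [show u - 1 + d = u + d - 1 by omega, show u + (d - 1) = u + d - 1 by omega]; ring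
    · rw [show u - 1 + d = u + d - 1 by omega]; ring
    · rw [show u + (d - 1) = u + d - 1 by omega]; ring
    · omega
  · simp [show u = 0 by omega, show d = 0 by omega]

theorem pascalAt_choose {u d : ℕ} (h : 0 < u + d) :
    PascalAt (fun u d => ((u + d).choose u : ℤ)) u d := by
  rcases u with _ | u <;> rcases d with _ | d
  · omega
  · simp [PascalAt]
  · simp [PascalAt]
  · simp only [PascalAt, Nat.add_sub_cancel, if_pos (Nat.succ_pos _)]
    rw [show u + 1 + (d + 1) = u + d + 1 + 1 by omega, Nat.choose_succ_succ',
      show u + (d + 1) = u + d + 1 by omega, show u + 1 + d = u + d + 1 by omega, Nat.cast_add]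

theorem pascalAt_choose_add (c : ℕ) {u d : ℕ} (h : u < d + c) :
    PascalAt (fun u d => ((u + d).choose (d + c) : ℤ)) u d := by
  rcases u with _ | u <;> rcases d with _ | d
  · simp [PascalAt, Nat.choose_eq_zero_of_lt (show 0 < c by omega)]
  · rcases c with _ | c
    · simp [PascalAt]
    · simp [PascalAt, Nat.choose_eq_zero_of_lt (show d + 1 < d + 1 + (c + 1) by omega),
        Nat.choose_eq_zero_of_lt (show d < d + (c + 1) by omega)]
  · simp [PascalAt, Nat.choose_eq_zero_of_lt (show u < c by omega),
      Nat.choose_eq_zero_of_lt (show u + 1 < c by omega)]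
  · simp only [PascalAt, Nat.add_sub_cancel, if_pos (Nat.succ_pos _)]
    rw [show u + 1 + (d + 1) = u + d + 1 + 1 by omega, show d + 1 + c = d + c + 1 by omega,
      Nat.choose_succ_succ', show u + (d + 1) = u + d + 1 by omega,
      show u + 1 + d = u + d + 1 by omega, Nat.cast_add, add_comm]

/-- By the reflection principle, for `c > 0` this counts the walks with `u` up-steps and `d`
down-steps whose height stays below `c`. -/
def ballot (c u d : ℕ) : ℤ := (u + d).choose u - (u + d).choose (d + c)

theorem pascalAt_ballot {c u d : ℕ} (h0 : 0 < u + d) (h : u < d + c) :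
    PascalAt (ballot c) u d :=
  (pascalAt_choose h0).sub (pascalAt_choose_add c h)

theorem ballot_add_eq_zero (c d : ℕ) : ballot c (d + c) d = 0 := by
  rw [ballot, add_comm d c]; ring

theorem ballot_zero_zero {c : ℕ} (hc : 0 < c) : ballot c 0 0 = 1 := by
  simp [ballot, Nat.choose_eq_zero_of_lt hc]

theorem add_one_mul_ballot {c u d : ℕ} (h : d + c = u + 1) :
    ((u : ℤ) + 1) * ballot c u d = c * (u + d).choose u := by
  have key := Nat.choose_succ_right_eq (u + d) u
  rw [Nat.add_sub_cancel_left] at key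
  rw [ballot, h]
  have hc : (c : ℤ) = u + 1 - d := by omega
  rw [hc]
  have key' : ((u + d).choose (u + 1) : ℤ) * (u + 1) = (u + d).choose u * d := by
    exact_mod_cast key
  linear_combination -key'

/-- `C(m + s, m)` counts the interleavings of a walk in coordinates `0, 2`, weighted by `G`, with
one in coordinates `1, 3`, weighted by `H`. -/
def shuffleProd (G H : ℕ → ℕ → ℤ) (v : Fin 4 → ℕ) : ℤ :=
  ((v 0 + v 2 + (v 1 + v 3)).choose (v 0 + v 2) : ℤ) * G (v 0) (v 2) * H (v 1) (v 3)

theorem shuffleProd_rec {G H : ℕ → ℕ → ℤ} {v : Fin 4 → ℕ} (hv : v ≠ 0)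
    (hG : 0 < v 0 + v 2 → PascalAt G (v 0) (v 2))
    (hH : 0 < v 1 + v 3 → PascalAt H (v 1) (v 3)) :
    shuffleProd G H v =
      ∑ i, if 0 < v i then shuffleProd G H (Function.update v i (v i - 1)) else 0 := by
  simp only [shuffleProd, Fin.sum_univ_four, Function.update_apply, Fin.reduceEq, if_true,
    if_false, mul_assoc]
  have hUD := pascalAt_weighted_sum (fun h => (hG h).mul_const (H (v 1) (v 3)))
    (fun m => ((m + (v 1 + v 3)).choose m : ℤ))
  have hPQ := pascalAt_weighted_sum (fun h => (hH h).const_mul (G (v 0) (v 2)))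
    (fun s => ((v 0 + v 2 + s).choose (v 0 + v 2) : ℤ))
  have hsum : ∑ i, v i ≠ 0 := fun h =>
    hv (funext fun i => Finset.sum_eq_zero_iff.1 h i (Finset.mem_univ i))
  rw [Fin.sum_univ_four] at hsum
  have hN := pascalAt_choose (u := v 0 + v 2) (d := v 1 + v 3) (by omega)
  unfold PascalAt at hN
  beta_reduce at hN
  linear_combination G (v 0) (v 2) * H (v 1) (v 3) * hN - hUD - hPQ

def halfSpace (b : ℤ) : Set (Fin 4 → ℕ) := {x | (x 0 : ℤ) - x 2 < b}

def ballotShuffle (c : ℕ) : (Fin 4 → ℕ) → ℤ :=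
  shuffleProd (ballot c) fun p q => ((p + q).choose p : ℤ)

theorem ballotShuffle_zero {c : ℕ} (hc : 0 < c) : ballotShuffle c 0 = 1 := by
  simp [ballotShuffle, shuffleProd, ballot_zero_zero hc]

theorem ballotShuffle_eq_zero {c : ℕ} {v : Fin 4 → ℕ} (h : v 0 = v 2 + c) :
    ballotShuffle c v = 0 := by
  rw [ballotShuffle, shuffleProd, h, ballot_add_eq_zero, mul_zero, zero_mul]

theorem ballotShuffle_rec {c : ℕ} {v : Fin 4 → ℕ} (hv : v ≠ 0) (h : v 0 < v 2 + c) :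
    ballotShuffle c v =
      ∑ i, if 0 < v i then ballotShuffle c (Function.update v i (v i - 1)) else 0 :=
  shuffleProd_rec hv (fun h0 => pascalAt_ballot h0 h) pascalAt_choose

theorem pathCount_halfSpace {b : ℤ} {c : ℕ} {a x : Fin 4 → ℕ} (hc0 : 0 < c)
    (hc : (c : ℤ) = b - (a 0 - a 2)) (hx : x ∈ halfSpace b) (hax : a ≤ x) :
    (pathCount (halfSpace b) a x : ℤ) = ballotShuffle c (x - a) := by
  refine pathCount_eq_of_recursion (fun x => ballotShuffle c (x - a))
    (show (a 0 : ℤ) - a 2 < b by omega) (by simp [ballotShuffle_zero hc0]) ?_ hx hax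
  intro x hx hax hxa
  have hv : x - a ≠ 0 := fun h => hxa (le_antisymm (tsub_eq_zero_iff_le.1 h) hax)
  have hxb : (x 0 : ℤ) - x 2 < b := hx
  rw [ballotShuffle_rec hv (by simp only [Pi.sub_apply]; omega)]
  refine Finset.sum_congr rfl fun i _ => ?_
  rw [← update_sub_one_sub]
  by_cases hai : a i < x i
  · rw [if_pos (show 0 < (x - a) i from tsub_pos_of_lt hai)]
    by_cases hx' : Function.update x i (x i - 1) ∈ halfSpace b
    · rw [if_pos ⟨hai, hx'⟩]
    · -- A step changes `x 0 - x 2` by at most one, so the predecessor lies on the boundary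
      -- line, where the closed form vanishes.
      rw [if_neg fun h => hx' h.2]
      have hx'b : ¬ ((Function.update x i (x i - 1) 0 : ℕ) : ℤ)
          - Function.update x i (x i - 1) 2 < b := hx'
      have hax' := le_update_sub_one hax hai
      have h0 : Function.update x i (x i - 1) 0 ≤ x 0 :=
        (update_sub_one_lt (Nat.zero_lt_of_lt hai)).le 0
      have h2 := le_update_sub_one_add_one x i 2
      have ha0 : a 0 ≤ Function.update x i (x i - 1) 0 := hax' 0
      have ha2 : a 2 ≤ Function.update x i (x i - 1) 2 := hax' 2
      refine ballotShuffle_eq_zero ?_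
      simp only [Pi.sub_apply]
      omega
  · rw [if_neg (show ¬ 0 < (x - a) i from fun h => hai (tsub_pos_iff_lt.1 h)),
      if_neg fun h => hai h.1]

theorem ballotShuffle_succ_sub_single {B : ℕ} {w : Fin 4 → ℕ} (hw : w 0 + 1 = w 2 + B)
    (hw2 : 0 < w 2) :
    (B : ℤ) * (w 0 + w 1 + w 2 + w 3 : ℕ) * ballotShuffle (B + 1) (w - Pi.single 2 1)
      = (B + 1) * w 2 * ballotShuffle B w := by
  obtain ⟨d, hd⟩ : ∃ d, w 2 = d + 1 := ⟨w 2 - 1, by omega⟩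
  simp only [ballotShuffle, shuffleProd, Pi.sub_apply, Pi.single_apply, Fin.reduceEq, if_true,
    if_false, tsub_zero, hd, Nat.add_sub_cancel]
  set u := w 0
  set p := w 1
  set q := w 3
  have hβ := add_one_mul_ballot (c := B) (u := u) (d := d + 1) (by omega)
  have hβ' := add_one_mul_ballot (c := B + 1) (u := u) (d := d) (by omega)
  have hC : ((u + d).choose u : ℤ) * (u + d + 1) = (u + d + 1).choose u * (d + 1) := by
    have := Nat.choose_mul_succ_eq (u + d) u
    rw [show u + d + 1 - u = d + 1 by omega] at this
    exact_mod_cast this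
  have hM : ((u + d + (p + q) : ℕ) + 1 : ℤ) * (u + d + (p + q)).choose (u + d)
      = (u + d + (p + q) + 1).choose (u + d + 1) * ((u + d : ℕ) + 1) := by
    exact_mod_cast Nat.add_one_mul_choose_eq (u + d + (p + q)) (u + d)
  rw [show u + (d + 1) = u + d + 1 by ring,
    show u + p + (d + 1) + q = u + d + (p + q) + 1 by ring,
    show u + d + 1 + (p + q) = u + d + (p + q) + 1 by ring] at *
  -- After multiplying by `u + 1`, both ballot factors become multiples of binomials.
  refine mul_left_cancel₀ (show (u : ℤ) + 1 ≠ 0 by positivity) ?_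
  push_cast at *
  linear_combination
    (B : ℤ) * (u + d + (p + q) + 1) * (u + d + (p + q)).choose (u + d) * (p + q).choose p * hβ'
    + (B : ℤ) * (p + q).choose p * (B + 1) * (u + d).choose u * hM
    + (B : ℤ) * (p + q).choose p * (B + 1) * (u + d + (p + q) + 1).choose (u + d + 1) * hC
    - ((B : ℤ) + 1) * (d + 1) * (u + d + (p + q) + 1).choose (u + d + 1) * (p + q).choose p * hβ

theorem exitCount_halfSpace {b : ℤ} {a y : Fin 4 → ℕ} (hy : (y 0 : ℤ) - y 2 = b)
    (hya : y ≠ a) :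
    exitCount (halfSpace b) a y = pathCount (halfSpace b) a (Function.update y 0 (y 0 - 1)) := by
  have hpred : ∀ i, (if 0 < y i then pathCount (halfSpace b) a (Function.update y i (y i - 1))
      else 0) = if i = 0 then pathCount (halfSpace b) a (Function.update y 0 (y 0 - 1)) else 0 := by
    intro i
    -- For `y i = 0` the truncated "predecessor" is `y` itself.
    have hout : i ≠ 0 ∨ y i = 0 → Function.update y i (y i - 1) ∉ halfSpace b := by
      intro hi h
      have h' : ((Function.update y i (y i - 1) 0 : ℕ) : ℤ)
          - Function.update y i (y i - 1) 2 < b := h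
      have h0 : y 0 ≤ Function.update y i (y i - 1) 0 + 1 := le_update_sub_one_add_one y i 0
      have h2 : Function.update y i (y i - 1) 2 ≤ y 2 := update_le_self_iff.2 (Nat.sub_le _ _) 2
      rcases hi with hi | hi
      · rw [Function.update_of_ne (Ne.symm hi)] at h'
        omega
      · rw [hi, Nat.zero_sub, ← hi, Function.update_eq_self] at h'
        omega
    split_ifs with hyi hi hi
    · subst hi; rfl
    · exact pathCount_of_notMem (hout (.inl hi))
    · subst hi; exact (pathCount_of_notMem (hout (.inr (by omega)))).symm
    · rfl
  rw [exitCount_eq_sum hya, Finset.sum_congr rfl fun i _ => hpred i, Finset.sum_ite_eq']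
  simp

theorem exitCount_halfSpace_eq_ballotShuffle {b : ℤ} {c : ℕ} {a y : Fin 4 → ℕ}
    (hy : (y 0 : ℤ) - y 2 = b) (hc0 : 0 < c) (hc : (c : ℤ) = b - (a 0 - a 2))
    (ha : a ≤ Function.update y 0 (y 0 - 1)) :
    (exitCount (halfSpace b) a y : ℤ) = ballotShuffle c (Function.update y 0 (y 0 - 1) - a) := by
  have ha0 : a 0 ≤ y 0 - 1 := by simpa using ha 0
  have ha2 : a 2 ≤ y 2 := by simpa using ha 2
  rw [exitCount_halfSpace hy fun h => by subst h; omega]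
  refine pathCount_halfSpace hc0 hc ?_ ha
  show ((Function.update y 0 (y 0 - 1) 0 : ℕ) : ℤ) - Function.update y 0 (y 0 - 1) 2 < b
  simp only [Function.update_self, Function.update_of_ne (show (2 : Fin 4) ≠ 0 by decide)]
  omega

/-- For `b > 0` and a boundary point `y ∈ ℕ⁴` with
`y₁ - y₃ = b` and `n = y₁ + y₂ + y₃ + y₄`, with `k(y)` the number of paths from
the origin staying in `R = {x : x₁ - x₃ < b}` except at `y`, and `k₃*(y)` the
number of such paths from `e₃`, one has
`b·(n-1)·k₃*(y) = (b+1)·y₃·k(y)`, i.e. `k₃*(y)/k(y) = ((b+1)/b)·y₃/(n-1)`. -/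
theorem estimator_count_identity_e3 (b : ℤ) (hb : 0 < b) (y : Fin 4 → ℕ)
    (hy : (y 0 : ℤ) - (y 2 : ℤ) = b) (n : ℕ) (hn : n = y 0 + y 1 + y 2 + y 3) :
    b * ((n : ℤ) - 1) *
        (exitCount {x : Fin 4 → ℕ | (x 0 : ℤ) - (x 2 : ℤ) < b}
          (Pi.single 2 1) y : ℤ)
      = (b + 1) * (y 2 : ℤ) *
        (exitCount {x : Fin 4 → ℕ | (x 0 : ℤ) - (x 2 : ℤ) < b} 0 y : ℤ) := by
  change b * _ * (exitCount (halfSpace b) _ y : ℤ) = _ * (exitCount (halfSpace b) 0 y : ℤ)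
  obtain ⟨B, rfl⟩ : ∃ B : ℕ, b = B := ⟨b.toNat, (Int.toNat_of_nonneg hb.le).symm⟩
  rcases Nat.eq_zero_or_pos (y 2) with hy2 | hy2
  · rw [exitCount, pathCount_eq_zero_of_not_le (fun h => by simpa [hy2] using h 2), hy2]
    simp
  have hw0 : Function.update y 0 (y 0 - 1) 0 = y 0 - 1 := Function.update_self _ _ _
  have hw2 : Function.update y 0 (y 0 - 1) 2 = y 2 := Function.update_of_ne (by decide) _ _
  have hk := exitCount_halfSpace_eq_ballotShuffle (c := B) (a := 0) hy (by omega) (by simp)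
    fun _ => Nat.zero_le _
  have hk3 := exitCount_halfSpace_eq_ballotShuffle (c := B + 1) (a := Pi.single 2 1) hy
    (by omega) (by simp) fun j => by
      rcases eq_or_ne j 2 with rfl | hj
      · rw [Pi.single_eq_same, hw2]; exact hy2
      · simp [hj]
  have key := ballotShuffle_succ_sub_single (B := B) (w := Function.update y 0 (y 0 - 1))
    (by rw [hw0, hw2]; omega) (by rwa [hw2])
  simp only [Function.update_apply, Fin.reduceEq, if_true, if_false] at key
  rw [hk, hk3, tsub_zero, show (n : ℤ) - 1 = (y 0 - 1 + y 1 + y 2 + y 3 : ℕ) by omega]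
  linear_combination key
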